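/- arXiv:2309.09725 — 2 statements merged into one kernel-verified Lean document; each statement's English description precedes it below -/
import Mathlib

section
/- Let Z ∈ ℝ^{K×N} and let P ∈ ℝ^{N×N} be a doubly stochastic matrix (entries nonnegative, rows and columns summing to 1). Then the nuclear norm satisfies ‖Z·P‖_* ≤ ‖Z‖_*. -/
open Matrix

namespace NNAux

lemma dot_self_nonneg {n : ℕ} (y : Fin n → ℝ) : 0 ≤ y ⬝ᵥ y :=
  Finset.sum_nonneg fun _ _ => mul_self_nonneg _

lemma transpose_mulVec_dot {m n : ℕ} (A : Matrix (Fin m) (Fin n) ℝ)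
    (x : Fin n → ℝ) (z : Fin m → ℝ) :
    x ⬝ᵥ (Aᵀ *ᵥ z) = (A *ᵥ x) ⬝ᵥ z := by
  rw [mulVec_transpose, dotProduct_comm, ← dotProduct_mulVec, dotProduct_comm]

lemma gram_dot {m n : ℕ} (M : Matrix (Fin m) (Fin n) ℝ) (x y : Fin n → ℝ) :
    (M *ᵥ x) ⬝ᵥ (M *ᵥ y) = x ⬝ᵥ ((Mᴴ * M) *ᵥ y) := by
  rw [conjTranspose_eq_transpose_of_trivial, ← mulVec_mulVec, transpose_mulVec_dot]

lemma dot_sum_left {n K : ℕ} (f : Fin n → Fin K → ℝ) (z : Fin K → ℝ) :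
    (∑ i, f i) ⬝ᵥ z = ∑ i, f i ⬝ᵥ z := by
  simp only [dotProduct, Finset.sum_apply, Finset.sum_mul]
  exact Finset.sum_comm

lemma parseval {N : ℕ} (b : OrthonormalBasis (Fin N) ℝ (EuclideanSpace ℝ (Fin N)))
    (p q : Fin N → ℝ) : ∑ i, (p ⬝ᵥ ⇑(b i)) * (⇑(b i) ⬝ᵥ q) = p ⬝ᵥ q := by
  have h := b.sum_inner_mul_inner ((WithLp.equiv 2 (Fin N → ℝ)).symm p)
    ((WithLp.equiv 2 (Fin N → ℝ)).symm q)
  simpa [PiLp.inner_apply, dotProduct, mul_comm] using h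

lemma orthonormal_dot {N : ℕ} (b : OrthonormalBasis (Fin N) ℝ (EuclideanSpace ℝ (Fin N)))
    (i k : Fin N) : (⇑(b i) : Fin N → ℝ) ⬝ᵥ ⇑(b k) = if i = k then 1 else 0 := by
  have h := orthonormal_iff_ite.mp b.orthonormal i k
  simpa [PiLp.inner_apply, dotProduct, mul_comm] using h

lemma sqrt_inv_mul {t : ℝ} (h0 : 0 ≤ t) : (Real.sqrt t)⁻¹ * t = Real.sqrt t := by
  rcases eq_or_lt_of_le h0 with h | h
  · rw [← h]; simp
  · have hs : Real.sqrt t ≠ 0 := (Real.sqrt_pos.mpr h).ne'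
    rw [inv_mul_eq_iff_eq_mul₀ hs, Real.mul_self_sqrt h0]

lemma sqrt_inv_mul_inv_mul {t : ℝ} (h0 : 0 ≤ t) (ht : t ≠ 0) :
    (Real.sqrt t)⁻¹ * ((Real.sqrt t)⁻¹ * t) = 1 := by
  rw [sqrt_inv_mul h0,
    inv_mul_cancel₀ (Real.sqrt_ne_zero'.mpr (lt_of_le_of_ne h0 (Ne.symm ht)))]

lemma cs_sum {n : ℕ} (a b : Fin n → ℝ) (ha : ∑ i, (a i) ^ 2 ≤ 1) (hb : ∑ i, (b i) ^ 2 ≤ 1) :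
    ∑ i, a i * b i ≤ 1 := by
  nlinarith [Finset.sum_mul_sq_le_sq_mul_sq Finset.univ a b,
    Finset.sum_nonneg (fun i (_ : i ∈ Finset.univ) => sq_nonneg (a i)),
    Finset.sum_nonneg (fun i (_ : i ∈ Finset.univ) => sq_nonneg (b i))]

lemma bessel {n K : ℕ} (u : Fin n → Fin K → ℝ)
    (horth : ∀ i k, i ≠ k → u i ⬝ᵥ u k = 0)
    (hnorm : ∀ i, u i ⬝ᵥ u i ≤ 1)
    (x : Fin K → ℝ) : ∑ i, (u i ⬝ᵥ x) ^ 2 ≤ x ⬝ᵥ x := by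
  obtain ⟨a, ha⟩ : ∃ a : Fin n → ℝ, ∀ i, a i = u i ⬝ᵥ x := ⟨_, fun _ => rfl⟩
  rw [show ∑ i, (u i ⬝ᵥ x) ^ 2 = ∑ i, (a i) ^ 2 from
    Finset.sum_congr rfl fun i _ => by rw [ha]]
  obtain ⟨y, hy⟩ : ∃ y : Fin K → ℝ, y = ∑ i, a i • u i := ⟨_, rfl⟩
  have hyx : y ⬝ᵥ x = ∑ i, (a i) ^ 2 := by
    rw [hy, dot_sum_left]
    refine Finset.sum_congr rfl fun i _ => ?_
    rw [smul_dotProduct, ← ha i, smul_eq_mul, sq]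
  have hyy : y ⬝ᵥ y = ∑ i, (a i) ^ 2 * (u i ⬝ᵥ u i) := by
    rw [hy, dot_sum_left]
    refine Finset.sum_congr rfl fun i _ => ?_
    rw [smul_dotProduct, smul_eq_mul, dotProduct_comm, dot_sum_left,
      Finset.sum_eq_single i (fun k _ hki => by
        rw [smul_dotProduct, smul_eq_mul, horth k i hki, mul_zero])
      (fun h => absurd (Finset.mem_univ i) h)]
    rw [smul_dotProduct, smul_eq_mul, dotProduct_comm]
    ring
  have hpos := dot_self_nonneg (x - y)
  have hexp : (x - y) ⬝ᵥ (x - y) = x ⬝ᵥ x - 2 * (y ⬝ᵥ x) + y ⬝ᵥ y := by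
    rw [dotProduct_sub, sub_dotProduct, sub_dotProduct, dotProduct_comm x y]
    ring
  have hle : ∑ i, (a i) ^ 2 * (u i ⬝ᵥ u i) ≤ ∑ i, (a i) ^ 2 :=
    Finset.sum_le_sum fun i _ => by nlinarith [sq_nonneg (a i), hnorm i]
  rw [hexp, hyx, hyy] at hpos
  linarith

lemma ds_contract {N : ℕ} (P : Matrix (Fin N) (Fin N) ℝ)
    (hP_nonneg : ∀ i j, 0 ≤ P i j)
    (hP_rows : ∀ i, ∑ j, P i j = 1)
    (hP_cols : ∀ j, ∑ i, P i j = 1) (y : Fin N → ℝ) :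
    (Pᵀ *ᵥ y) ⬝ᵥ (Pᵀ *ᵥ y) ≤ y ⬝ᵥ y := by
  have key : ∀ j, ((Pᵀ *ᵥ y) j) ^ 2 ≤ ∑ i, P i j * (y i) ^ 2 := by
    intro j
    have h := Finset.sum_mul_sq_le_sq_mul_sq Finset.univ
      (fun i => Real.sqrt (P i j)) (fun i => Real.sqrt (P i j) * y i)
    have e1 : ∀ i, Real.sqrt (P i j) * (Real.sqrt (P i j) * y i) = P i j * y i := by
      intro i
      rw [← mul_assoc, Real.mul_self_sqrt (hP_nonneg i j)]
    have e2 : ∀ i, Real.sqrt (P i j) ^ 2 = P i j := fun i => Real.sq_sqrt (hP_nonneg i j)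
    have e3 : ∀ i, (Real.sqrt (P i j) * y i) ^ 2 = P i j * (y i) ^ 2 := by
      intro i
      rw [mul_pow, e2]
    simp only [e1, e2, e3] at h
    have hmv : (Pᵀ *ᵥ y) j = ∑ i, P i j * y i := by
      simp [mulVec, dotProduct, transpose_apply]
    rw [hmv]
    calc (∑ i, P i j * y i) ^ 2 ≤ (∑ i, P i j) * ∑ i, P i j * (y i) ^ 2 := h
      _ = ∑ i, P i j * (y i) ^ 2 := by rw [hP_cols j, one_mul]
  calc (Pᵀ *ᵥ y) ⬝ᵥ (Pᵀ *ᵥ y) = ∑ j, ((Pᵀ *ᵥ y) j) ^ 2 := by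
        simp [dotProduct, sq]
    _ ≤ ∑ j, ∑ i, P i j * (y i) ^ 2 := Finset.sum_le_sum fun j _ => key j
    _ = ∑ i, (∑ j, P i j) * (y i) ^ 2 := by
        rw [Finset.sum_comm]
        exact Finset.sum_congr rfl fun i _ => by rw [Finset.sum_mul]
    _ = y ⬝ᵥ y := by
        simp [hP_rows, dotProduct, sq]

end NNAux

/-- The nuclear norm of a real matrix: the sum of its singular values,
i.e. the square roots of the eigenvalues of `Aᴴ * A`. -/
noncomputable def nuclearNorm {m n : ℕ} (A : Matrix (Fin m) (Fin n) ℝ) : ℝ :=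
  ∑ i, Real.sqrt ((Matrix.isHermitian_conjTranspose_mul_self A).eigenvalues i)

theorem nuclearNorm_mul_doublyStochastic_le
    {K N : ℕ} (Z : Matrix (Fin K) (Fin N) ℝ)
    (P : Matrix (Fin N) (Fin N) ℝ)
    (hP_nonneg : ∀ i j, 0 ≤ P i j)
    (hP_rows : ∀ i, ∑ j, P i j = 1)
    (hP_cols : ∀ j, ∑ i, P i j = 1) :
    nuclearNorm (Z * P) ≤ nuclearNorm Z := by
  classical
  have hB : ((Z * P)ᴴ * (Z * P)).IsHermitian := isHermitian_conjTranspose_mul_self (Z * P)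
  have hZh : (Zᴴ * Z).IsHermitian := isHermitian_conjTranspose_mul_self Z
  have hlam_nn : ∀ i, 0 ≤ hB.eigenvalues i := fun i =>
    eigenvalues_conjTranspose_mul_self_nonneg (Z * P) i
  have hmu_nn : ∀ j, 0 ≤ hZh.eigenvalues j := fun j =>
    eigenvalues_conjTranspose_mul_self_nonneg Z j
  rw [show nuclearNorm (Z * P) = ∑ i, Real.sqrt (hB.eigenvalues i) from rfl,
    show nuclearNorm Z = ∑ j, Real.sqrt (hZh.eigenvalues j) from rfl]
  obtain ⟨v, hvv, heigA, hvpar⟩ : ∃ v : Fin N → (Fin N → ℝ),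
      (∀ i k, v i ⬝ᵥ v k = if i = k then 1 else 0) ∧
      (∀ i, ((Z * P)ᴴ * (Z * P)) *ᵥ v i = hB.eigenvalues i • v i) ∧
      (∀ p q : Fin N → ℝ, ∑ i, (p ⬝ᵥ v i) * (v i ⬝ᵥ q) = p ⬝ᵥ q) :=
    ⟨fun i => ⇑(hB.eigenvectorBasis i), fun i k => NNAux.orthonormal_dot _ i k,
      fun i => hB.mulVec_eigenvectorBasis i, fun p q => NNAux.parseval _ p q⟩
  obtain ⟨w, hww, heigZ, hwpar⟩ : ∃ w : Fin N → (Fin N → ℝ),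
      (∀ j k, w j ⬝ᵥ w k = if j = k then 1 else 0) ∧
      (∀ j, (Zᴴ * Z) *ᵥ w j = hZh.eigenvalues j • w j) ∧
      (∀ p q : Fin N → ℝ, ∑ j, (p ⬝ᵥ w j) * (w j ⬝ᵥ q) = p ⬝ᵥ q) :=
    ⟨fun j => ⇑(hZh.eigenvectorBasis j), fun j k => NNAux.orthonormal_dot _ j k,
      fun j => hZh.mulVec_eigenvectorBasis j, fun p q => NNAux.parseval _ p q⟩
  have hAvAv : ∀ i k, ((Z * P) *ᵥ v i) ⬝ᵥ ((Z * P) *ᵥ v k)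
      = hB.eigenvalues k * (if i = k then 1 else 0) := by
    intro i k
    rw [NNAux.gram_dot, heigA k, dotProduct_smul, hvv i k, smul_eq_mul]
  have hAv : ∀ i, ((Z * P) *ᵥ v i) ⬝ᵥ ((Z * P) *ᵥ v i) = hB.eigenvalues i := by
    intro i
    rw [hAvAv i i, if_pos rfl, mul_one]
  have hZwZw : ∀ j k, (Z *ᵥ w j) ⬝ᵥ (Z *ᵥ w k)
      = hZh.eigenvalues k * (if j = k then 1 else 0) := by
    intro j k
    rw [NNAux.gram_dot, heigZ k, dotProduct_smul, hww j k, smul_eq_mul]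
  have hZw2 : ∀ j, (Z *ᵥ w j) ⬝ᵥ (Z *ᵥ w j) = hZh.eigenvalues j := by
    intro j
    rw [hZwZw j j, if_pos rfl, mul_one]
  -- left singular vectors of Z * P
  obtain ⟨u, hudef⟩ : ∃ u : Fin N → Fin K → ℝ, u = fun i =>
      if hB.eigenvalues i = 0 then 0
      else (Real.sqrt (hB.eigenvalues i))⁻¹ • ((Z * P) *ᵥ v i) := ⟨_, rfl⟩
  -- left singular vectors of Z
  obtain ⟨xx, hxxdef⟩ : ∃ xx : Fin N → Fin K → ℝ, xx = fun j =>
      if hZh.eigenvalues j = 0 then 0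
      else (Real.sqrt (hZh.eigenvalues j))⁻¹ • (Z *ᵥ w j) := ⟨_, rfl⟩
  have hu_dot : ∀ i, u i ⬝ᵥ ((Z * P) *ᵥ v i) = Real.sqrt (hB.eigenvalues i) := by
    intro i
    by_cases h : hB.eigenvalues i = 0
    · simp only [hudef]
      rw [if_pos h, zero_dotProduct, h, Real.sqrt_zero]
    · simp only [hudef]
      rw [if_neg h, smul_dotProduct, smul_eq_mul, hAv i, NNAux.sqrt_inv_mul (hlam_nn i)]
  have hu_orth : ∀ i k, i ≠ k → u i ⬝ᵥ u k = 0 := by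
    intro i k hik
    by_cases hi : hB.eigenvalues i = 0
    · simp only [hudef]
      rw [if_pos hi, zero_dotProduct]
    by_cases hk : hB.eigenvalues k = 0
    · simp only [hudef]
      rw [if_pos hk, dotProduct_zero]
    · simp only [hudef]
      rw [if_neg hi, if_neg hk, smul_dotProduct, dotProduct_smul, smul_eq_mul, smul_eq_mul,
        hAvAv i k, if_neg hik, mul_zero, mul_zero, mul_zero]
  have hu_norm : ∀ i, u i ⬝ᵥ u i ≤ 1 := by
    intro i
    by_cases hi : hB.eigenvalues i = 0
    · simp only [hudef]
      rw [if_pos hi, zero_dotProduct]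
      exact zero_le_one
    · simp only [hudef]
      rw [if_neg hi, smul_dotProduct, dotProduct_smul, smul_eq_mul, smul_eq_mul,
        hAv i, NNAux.sqrt_inv_mul_inv_mul (hlam_nn i) hi]
  have hZw : ∀ j, Z *ᵥ w j = Real.sqrt (hZh.eigenvalues j) • xx j := by
    intro j
    by_cases h : hZh.eigenvalues j = 0
    · have h0 : Z *ᵥ w j = 0 := dotProduct_self_eq_zero.mp (by rw [hZw2 j, h])
      simp only [hxxdef]
      rw [if_pos h, smul_zero, h0]
    · have hs : 0 < Real.sqrt (hZh.eigenvalues j) :=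
        Real.sqrt_pos.mpr (lt_of_le_of_ne (hmu_nn j) (Ne.symm h))
      simp only [hxxdef]
      rw [if_neg h, smul_smul, mul_inv_cancel₀ hs.ne', one_smul]
  have hxx_norm : ∀ j, xx j ⬝ᵥ xx j ≤ 1 := by
    intro j
    by_cases h : hZh.eigenvalues j = 0
    · simp only [hxxdef]
      rw [if_pos h, zero_dotProduct]
      exact zero_le_one
    · simp only [hxxdef]
      rw [if_neg h, smul_dotProduct, dotProduct_smul, smul_eq_mul, smul_eq_mul,
        hZw2 j, NNAux.sqrt_inv_mul_inv_mul (hmu_nn j) h]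
  -- the core expansion
  have hcore : ∀ i, u i ⬝ᵥ ((Z * P) *ᵥ v i)
      = ∑ j, Real.sqrt (hZh.eigenvalues j) * ((w j ⬝ᵥ (P *ᵥ v i)) * (u i ⬝ᵥ xx j)) := by
    intro i
    have h1 : (Z * P) *ᵥ v i = Z *ᵥ (P *ᵥ v i) := by rw [← mulVec_mulVec]
    have h2 := NNAux.transpose_mulVec_dot Zᵀ (u i) (P *ᵥ v i)
    rw [transpose_transpose] at h2
    rw [h1, h2, ← hwpar (Zᵀ *ᵥ u i) (P *ᵥ v i)]
    refine Finset.sum_congr rfl fun j _ => ?_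
    have h3 : (Zᵀ *ᵥ u i) ⬝ᵥ w j = Real.sqrt (hZh.eigenvalues j) * (u i ⬝ᵥ xx j) := by
      rw [dotProduct_comm, NNAux.transpose_mulVec_dot Z (w j) (u i), hZw j,
        smul_dotProduct, smul_eq_mul, dotProduct_comm]
    rw [h3]
    ring
  -- the two square-sum bounds
  have hb : ∀ j, ∑ i, (w j ⬝ᵥ (P *ᵥ v i)) ^ 2 ≤ 1 := by
    intro j
    have e : ∀ i, w j ⬝ᵥ (P *ᵥ v i) = (Pᵀ *ᵥ w j) ⬝ᵥ v i := by
      intro i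
      have h := NNAux.transpose_mulVec_dot Pᵀ (w j) (v i)
      rwa [transpose_transpose] at h
    calc ∑ i, (w j ⬝ᵥ (P *ᵥ v i)) ^ 2
        = ∑ i, ((Pᵀ *ᵥ w j) ⬝ᵥ v i) * (v i ⬝ᵥ (Pᵀ *ᵥ w j)) := by
          refine Finset.sum_congr rfl fun i _ => ?_
          rw [e i, sq, dotProduct_comm (v i)]
      _ = (Pᵀ *ᵥ w j) ⬝ᵥ (Pᵀ *ᵥ w j) := hvpar _ _
      _ ≤ w j ⬝ᵥ w j := NNAux.ds_contract P hP_nonneg hP_rows hP_cols (w j)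
      _ = 1 := by rw [hww j j, if_pos rfl]
  have ha : ∀ j, ∑ i, (u i ⬝ᵥ xx j) ^ 2 ≤ 1 := fun j =>
    le_trans (NNAux.bessel u hu_orth hu_norm (xx j)) (hxx_norm j)
  -- final computation
  calc ∑ i, Real.sqrt (hB.eigenvalues i)
      = ∑ i, u i ⬝ᵥ ((Z * P) *ᵥ v i) := Finset.sum_congr rfl fun i _ => (hu_dot i).symm
    _ = ∑ i, ∑ j, Real.sqrt (hZh.eigenvalues j)
          * ((w j ⬝ᵥ (P *ᵥ v i)) * (u i ⬝ᵥ xx j)) :=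
        Finset.sum_congr rfl fun i _ => hcore i
    _ = ∑ j, Real.sqrt (hZh.eigenvalues j)
          * ∑ i, (w j ⬝ᵥ (P *ᵥ v i)) * (u i ⬝ᵥ xx j) := by
        rw [Finset.sum_comm]
        exact Finset.sum_congr rfl fun j _ => (Finset.mul_sum _ _ _).symm
    _ ≤ ∑ j, Real.sqrt (hZh.eigenvalues j) * 1 :=
        Finset.sum_le_sum fun j _ =>
          mul_le_mul_of_nonneg_left
            (NNAux.cs_sum _ _ (hb j) (ha j)) (Real.sqrt_nonneg _)
    _ = ∑ j, Real.sqrt (hZh.eigenvalues j) := by simp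
end

section
/- Fix positive reals n_A > n_B and k_A, k_B > 0. The function σ(w) = (k_A + k_B)(k_B n_A + k_A n_B w²)/(k_B + k_A w)² is nonincreasing on the interval [1, n_A/n_B], and consequently σ(w) ≤ σ(1) = (k_B n_A + k_A n_B)/(k_A + k_B) ≤ n_A for all w ∈ [1, n_A/n_B]. -/
theorem sigma_antitone_and_bounds
    (nA nB kA kB : ℝ)
    (hnB : 0 < nB) (hAB : nB < nA) (hkA : 0 < kA) (hkB : 0 < kB)
    (σ : ℝ → ℝ)
    (hσ : σ = fun w => (kA + kB) * (kB * nA + kA * nB * w ^ 2) /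
      (kB + kA * w) ^ 2) :
    AntitoneOn σ (Set.Icc 1 (nA / nB)) ∧
    σ 1 = (kB * nA + kA * nB) / (kA + kB) ∧
    (∀ w ∈ Set.Icc 1 (nA / nB), σ w ≤ σ 1) ∧
    σ 1 ≤ nA := by
  subst hσ
  have hanti : AntitoneOn (fun w => (kA + kB) * (kB * nA + kA * nB * w ^ 2) /
      (kB + kA * w) ^ 2) (Set.Icc 1 (nA / nB)) := by
    intro x hx y hy hxy
    obtain ⟨hx1, hx2⟩ := hx
    obtain ⟨hy1, hy2⟩ := hy
    have hxnB : nB * x ≤ nA := by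
      rw [mul_comm]; exact (le_div_iff₀ hnB).mp hx2
    have hynB : nB * y ≤ nA := by
      rw [mul_comm]; exact (le_div_iff₀ hnB).mp hy2
    have hdx : (0:ℝ) < (kB + kA * x) ^ 2 := by positivity
    have hdy : (0:ℝ) < (kB + kA * y) ^ 2 := by positivity
    simp only
    rw [div_le_div_iff₀ hdy hdx]
    have hkAB : (0:ℝ) ≤ kA + kB := by positivity
    nlinarith [mul_nonneg (mul_nonneg hkA.le hkB.le) (mul_nonneg (sub_nonneg.mpr hxy)
        (by nlinarith [mul_nonneg hkB.le (sub_nonneg.mpr hxnB),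
              mul_nonneg hkB.le (sub_nonneg.mpr hynB),
              mul_nonneg (mul_nonneg hkA.le (le_trans zero_le_one hx1)) (sub_nonneg.mpr hynB),
              mul_nonneg (mul_nonneg hkA.le (le_trans zero_le_one hy1)) (sub_nonneg.mpr hxnB)] :
            (0:ℝ) ≤ 2 * kB * nA - kB * nB * (x + y) + kA * (nA * (x + y) - 2 * nB * x * y))),
      sq_nonneg (x - y), mul_pos hkA hkB]
  have hone : ((fun w => (kA + kB) * (kB * nA + kA * nB * w ^ 2) /
      (kB + kA * w) ^ 2) 1 : ℝ) = (kB * nA + kA * nB) / (kA + kB) := by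
    have h1 : kB + kA * 1 ≠ 0 := by positivity
    have h2 : kA + kB ≠ 0 := by positivity
    field_simp
    ring
  refine ⟨hanti, hone, ?_, ?_⟩
  · intro w hw
    have h1mem : (1:ℝ) ∈ Set.Icc 1 (nA / nB) := by
      constructor
      · exact le_refl 1
      · exact le_of_lt ((one_lt_div hnB).mpr hAB)
    exact hanti h1mem hw hw.1
  · rw [hone, div_le_iff₀ (by positivity)]
    nlinarith
end
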